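/- The map ψ_k : S¹ × B^{2n}(R₀) → S¹ × B^{2n}(R₀/√(1+kR₀²)) defined by ψ_k(θ, w₁, …, w_n) = (θ, e^{2πikθ}w₁/√(1+k|w|²), …, e^{2πikθ}w_n/√(1+k|w|²)) pulls back the contact form dθ − (r')²·α_std (where r' is the radial coordinate in the target and α_std is the standard contact form on spheres, i.e. the form dθ − Σ(x_j dy_j − y_j dx_j) in Cartesian coordinates) to a positive function multiple of the form dθ − r²·α_std on the source; in particular ψ_k is a contactomorphism for the standard contact structures ker(dθ − r²α_std). -/

import Mathlib

open Set Complex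
open scoped InnerProductSpace

noncomputable section

/-- The cylinder `S¹ × B^{2n}(R)` is modelled on `ℝ × ℂⁿ` (the first coordinate is the
`2π`-periodic angle `θ`); the standard contact form `dθ − r²α_std = dθ − Σ(xⱼdyⱼ − yⱼdxⱼ)`,
evaluated at the point `p` on the tangent vector `v`, is `v.1 − Im ⟪p.2, v.2⟫`. -/
def ηstd (n : ℕ) (p : ℝ × EuclideanSpace ℂ (Fin n)) :
    ℝ × EuclideanSpace ℂ (Fin n) → ℝ :=
  fun v => v.1 - (⟪p.2, v.2⟫_ℂ).im

/-- The squeezing map `ψ_k(θ, w) = (θ, e^{ikθ}w/√(1+k‖w‖²))` (the angle `θ ∈ ℝ/2πℤ`,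
rotation by `k` full turns as `θ` goes once around the circle). -/
def ψ (n k : ℕ) : ℝ × EuclideanSpace ℂ (Fin n) → ℝ × EuclideanSpace ℂ (Fin n) :=
  fun p => (p.1, (Complex.exp (k * p.1 * Complex.I) / (Real.sqrt (1 + k * ‖p.2‖ ^ 2) : ℂ)) • p.2)

/-!
`ψ_k` is the fibrewise radial squeeze `w ↦ w / √(1 + k‖w‖²)` followed by the fibrewise rotation
`w ↦ e^{ikθ} w`. A real rescaling `w ↦ g(w) w` pulls `dθ − Im⟪w, dw⟫` back to
`dθ − g² Im⟪w, dw⟫`, since the term `dg · Im⟪w, w⟫` vanishes; the rotation pulls it back to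
`dθ − Im⟪w, dw⟫ − k‖w‖² dθ`. With `g² = 1 / (1 + k‖w‖²)` the two combine to
`(dθ − Im⟪w, dw⟫) / (1 + k‖w‖²)`. On radii the squeeze is the increasing map
`t ↦ t / √(1 + kt²)`, and the squeeze with `−k` inverts it, which gives the bijection of balls.
-/

section Squeeze

variable {F : Type*} [NormedAddCommGroup F] [NormedSpace ℝ F]

def squeezeFactor (c : ℝ) (w : F) : ℝ := (√(1 + c * ‖w‖ ^ 2))⁻¹

def squeeze (c : ℝ) (w : F) : F := squeezeFactor c w • w

lemma norm_squeeze (c : ℝ) (w : F) : ‖squeeze c w‖ = ‖w‖ / √(1 + c * ‖w‖ ^ 2) := by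
  rw [squeeze, squeezeFactor, norm_smul, norm_inv, Real.norm_of_nonneg (Real.sqrt_nonneg _),
    inv_mul_eq_div]

lemma squeeze_neg_squeeze {c : ℝ} {w : F} (hw : 0 < 1 + c * ‖w‖ ^ 2) :
    squeeze (-c) (squeeze c w) = w := by
  have h : 1 + -c * ‖squeeze c w‖ ^ 2 = (1 + c * ‖w‖ ^ 2)⁻¹ := by
    rw [norm_squeeze, div_pow, Real.sq_sqrt hw.le]
    field_simp
    ring
  rw [squeeze, squeezeFactor, h, Real.sqrt_inv, inv_inv, squeeze, squeezeFactor, smul_smul,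
    mul_inv_cancel₀ (Real.sqrt_pos.2 hw).ne', one_smul]

lemma strictMonoOn_div_sqrt_one_add_mul_sq {c : ℝ} (hc : 0 ≤ c) :
    StrictMonoOn (fun t : ℝ => t / √(1 + c * t ^ 2)) (Ici 0) := by
  intro a ha b hb hab
  have ha' : 0 < 1 + c * a ^ 2 := by positivity
  have hb' : 0 < 1 + c * b ^ 2 := by positivity
  have hsq : a ^ 2 < b ^ 2 := pow_lt_pow_left₀ hab ha two_ne_zero
  refine lt_of_pow_lt_pow_left₀ 2 (div_nonneg hb (Real.sqrt_nonneg _)) ?_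
  rw [div_pow, div_pow, Real.sq_sqrt ha'.le, Real.sq_sqrt hb'.le, div_lt_div_iff₀ ha' hb']
  linarith

lemma mul_sq_lt_one_of_lt_div_sqrt {c z R : ℝ} (hc : 0 ≤ c) (hz : 0 ≤ z)
    (hzR : z < R / √(1 + c * R ^ 2)) : c * z ^ 2 < 1 := by
  have hR : 0 < 1 + c * R ^ 2 := by positivity
  rw [lt_div_iff₀ (Real.sqrt_pos.2 hR)] at hzR
  have : (z * √(1 + c * R ^ 2)) ^ 2 < R ^ 2 :=
    pow_lt_pow_left₀ hzR (by positivity) two_ne_zero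
  rw [mul_pow, Real.sq_sqrt hR.le] at this
  nlinarith

lemma squeeze_bijOn_ball {c : ℝ} (hc : 0 ≤ c) (R : ℝ) :
    BijOn (squeeze c) (Metric.ball (0 : F) R) (Metric.ball 0 (R / √(1 + c * R ^ 2))) := by
  have hf := strictMonoOn_div_sqrt_one_add_mul_sq hc
  have hinv : ∀ w : F, ‖w‖ < R / √(1 + c * R ^ 2) → squeeze c (squeeze (-c) w) = w := by
    intro w hw
    have := mul_sq_lt_one_of_lt_div_sqrt hc (norm_nonneg w) hw
    simpa using squeeze_neg_squeeze (c := -c) (w := w) (by linarith)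
  refine InvOn.bijOn (f' := squeeze (-c))
    ⟨fun w _ => squeeze_neg_squeeze (by positivity), fun w hw => hinv w (mem_ball_zero_iff.1 hw)⟩
    (fun w hw => ?_) (fun w hw => ?_)
  · rw [mem_ball_zero_iff] at hw ⊢
    rw [norm_squeeze]
    exact hf (norm_nonneg w) ((norm_nonneg w).trans hw.le) hw
  · rw [mem_ball_zero_iff] at hw ⊢
    have hR : 0 ≤ R := by
      by_contra! h
      exact (hw.trans_le (div_nonpos_of_nonpos_of_nonneg h.le (Real.sqrt_nonneg _))).not_ge
        (norm_nonneg w)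
    rw [← hf.lt_iff_lt (norm_nonneg _) hR]
    rwa [← norm_squeeze, hinv w hw]

end Squeeze

lemma differentiableAt_squeezeFactor {F : Type*} [NormedAddCommGroup F] [InnerProductSpace ℝ F]
    {c : ℝ} {w : F} (hw : 0 < 1 + c * ‖w‖ ^ 2) : DifferentiableAt ℝ (squeezeFactor c) w := by
  have hsq : DifferentiableAt ℝ (fun w : F => 1 + c * ‖w‖ ^ 2) w :=
    ((differentiableAt_id.norm_sq ℝ).const_mul c).const_add 1
  exact (hsq.sqrt hw.ne').inv (Real.sqrt_pos.2 hw).ne'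

section Rotation

variable {E : Type*} [NormedAddCommGroup E] [NormedSpace ℂ E]

def fibreRotation (a : ℝ) (p : ℝ × E) : ℝ × E := (p.1, exp (a * p.1 * I) • p.2)

lemma norm_exp_mul_I (a θ : ℝ) : ‖exp (a * θ * I)‖ = 1 := by
  rw [← ofReal_mul, norm_exp_ofReal_mul_I]

lemma fibreRotation_neg_fibreRotation (a : ℝ) (p : ℝ × E) :
    fibreRotation (-a) (fibreRotation a p) = p := by
  simp [fibreRotation, smul_smul, ← exp_add]

lemma fibreRotation_bijOn_ball (a r : ℝ) :
    BijOn (fibreRotation a) ((univ : Set ℝ) ×ˢ Metric.ball (0 : E) r)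
      ((univ : Set ℝ) ×ˢ Metric.ball (0 : E) r) := by
  have hmaps : ∀ b : ℝ, MapsTo (fibreRotation b) ((univ : Set ℝ) ×ˢ Metric.ball (0 : E) r)
      ((univ : Set ℝ) ×ˢ Metric.ball (0 : E) r) := fun b p hp =>
    ⟨mem_univ _, by simpa [fibreRotation, norm_smul, norm_exp_mul_I] using hp.2⟩
  refine InvOn.bijOn (f' := fibreRotation (-a))
    ⟨fun p _ => fibreRotation_neg_fibreRotation a p, fun p _ => ?_⟩ (hmaps a) (hmaps (-a))
  simpa using fibreRotation_neg_fibreRotation (-a) p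

lemma differentiable_fibreRotation (a : ℝ) : Differentiable ℝ (fibreRotation (E := E) a) := by
  unfold fibreRotation
  fun_prop

lemma fderiv_fibreRotation_apply (a : ℝ) (p u : ℝ × E) :
    fderiv ℝ (fibreRotation a) p u = (u.1, exp (a * p.1 * I) • (u.2 + (a * u.1 * I) • p.2)) := by
  have hphase : HasDerivAt (fun t : ℝ => exp (a * t * I)) (exp (a * p.1 * I) * (a * I)) p.1 := by
    simpa using (((hasDerivAt_id p.1).ofReal_comp.const_mul (a : ℂ)).mul_const I).cexp
  have hc := hphase.hasFDerivAt.comp p (hasFDerivAt_fst (𝕜 := ℝ) (p := p))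
  have h : HasFDerivAt (fibreRotation a) _ p := hasFDerivAt_fst.prodMk (hc.smul hasFDerivAt_snd)
  rw [h.fderiv]
  simp only [ContinuousLinearMap.prod_apply, ContinuousLinearMap.coe_fst', add_apply, smul_apply,
    ContinuousLinearMap.coe_snd', ContinuousLinearMap.smulRight_apply,
    ContinuousLinearMap.comp_apply,
    ContinuousLinearMap.toSpanSingleton_apply, Function.comp_apply, real_smul, smul_add, smul_smul]
  ring_nf

end Rotation

section Scaling

variable {F : Type*} [NormedAddCommGroup F] [NormedSpace ℝ F]

def fibreScaling (g : F → ℝ) (p : ℝ × F) : ℝ × F := (p.1, g p.2 • p.2)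

lemma differentiableAt_fibreScaling {g : F → ℝ} {p : ℝ × F} (hg : DifferentiableAt ℝ g p.2) :
    DifferentiableAt ℝ (fibreScaling g) p := by
  unfold fibreScaling
  fun_prop

lemma fderiv_fibreScaling_apply {g : F → ℝ} {p : ℝ × F} (hg : DifferentiableAt ℝ g p.2)
    (u : ℝ × F) :
    fderiv ℝ (fibreScaling g) p u = (u.1, g p.2 • u.2 + fderiv ℝ g p.2 u.2 • p.2) := by
  have h : HasFDerivAt (fibreScaling g) _ p :=
    hasFDerivAt_fst.prodMk ((hg.hasFDerivAt.comp p hasFDerivAt_snd).smul hasFDerivAt_snd)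
  rw [h.fderiv]
  simp

end Scaling

section ContactForm

variable {n : ℕ}

lemma ηstd_fderiv_fibreRotation (a : ℝ) (p u : ℝ × EuclideanSpace ℂ (Fin n)) :
    ηstd n (fibreRotation a p) (fderiv ℝ (fibreRotation a) p u) =
      ηstd n p u - a * ‖p.2‖ ^ 2 * u.1 := by
  have hrot : ∀ v : EuclideanSpace ℂ (Fin n),
      ⟪exp (a * p.1 * I) • p.2, exp (a * p.1 * I) • v⟫_ℂ = ⟪p.2, v⟫_ℂ := fun v => by
    rw [inner_smul_left, inner_smul_right, ← mul_assoc, conj_mul', norm_exp_mul_I, ofReal_one,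
      one_pow, one_mul]
  rw [fderiv_fibreRotation_apply]
  simp only [ηstd, fibreRotation, hrot, inner_add_right, inner_smul_right,
    inner_self_eq_norm_sq_to_K]
  simp only [coe_algebraMap, ← ofReal_pow, add_im, mul_im, mul_re, ofReal_re, ofReal_im, I_re,
    I_im, mul_zero, mul_one, zero_mul, sub_zero, add_zero, sub_self, zero_add]
  ring

lemma ηstd_fderiv_fibreScaling {g : EuclideanSpace ℂ (Fin n) → ℝ}
    {p : ℝ × EuclideanSpace ℂ (Fin n)} (hg : DifferentiableAt ℝ g p.2)
    (u : ℝ × EuclideanSpace ℂ (Fin n)) :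
    ηstd n (fibreScaling g p) (fderiv ℝ (fibreScaling g) p u) =
      u.1 - g p.2 ^ 2 * (⟪p.2, u.2⟫_ℂ).im := by
  rw [fderiv_fibreScaling_apply hg]
  simp only [ηstd, fibreScaling, RCLike.real_smul_eq_coe_smul (K := ℂ), inner_add_right,
    inner_smul_real_left, inner_smul_real_right, inner_self_eq_norm_sq_to_K]
  simp only [coe_algebraMap, smul_eq_mul, ← ofReal_pow, add_im, mul_im, mul_re, ofReal_re,
    ofReal_im, zero_mul, mul_zero, add_zero, sub_zero, sub_right_inj]
  ring

end ContactForm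

lemma ψ_eq_comp (n k : ℕ) : ψ n k = fibreRotation k ∘ fibreScaling (squeezeFactor k) := by
  funext p
  simp only [ψ, fibreRotation, fibreScaling, squeezeFactor, Function.comp_apply, Prod.mk.injEq,
    true_and]
  rw [RCLike.real_smul_eq_coe_smul (K := ℂ), smul_smul, div_eq_mul_inv]
  push_cast
  rfl

lemma ηstd_fderiv_ψ (n k : ℕ) (p v : ℝ × EuclideanSpace ℂ (Fin n)) :
    ηstd n (ψ n k p) (fderiv ℝ (ψ n k) p v) = (1 + (k : ℝ) * ‖p.2‖ ^ 2)⁻¹ * ηstd n p v := by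
  have hw : 0 < 1 + (k : ℝ) * ‖p.2‖ ^ 2 := by positivity
  have hg := differentiableAt_squeezeFactor hw
  have hsq : squeezeFactor (k : ℝ) p.2 ^ 2 = (1 + (k : ℝ) * ‖p.2‖ ^ 2)⁻¹ := by
    rw [squeezeFactor, inv_pow, Real.sq_sqrt hw.le]
  have hnorm : ‖(fibreScaling (squeezeFactor (k : ℝ)) p).2‖ ^ 2 =
      ‖p.2‖ ^ 2 / (1 + (k : ℝ) * ‖p.2‖ ^ 2) := by
    rw [fibreScaling, ← squeeze, norm_squeeze, div_pow, Real.sq_sqrt hw.le]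
  rw [ψ_eq_comp,
    fderiv_comp p (differentiable_fibreRotation _ _) (differentiableAt_fibreScaling hg),
    ContinuousLinearMap.comp_apply, Function.comp_apply, ηstd_fderiv_fibreRotation,
    ηstd_fderiv_fibreScaling hg, fderiv_fibreScaling_apply hg, hsq, hnorm, ηstd]
  field_simp
  ring

theorem contact_blowup_stmt0_general (n k : ℕ) (R₀ : ℝ) :
    Set.BijOn (ψ n k)
      ((univ : Set ℝ) ×ˢ Metric.ball (0 : EuclideanSpace ℂ (Fin n)) R₀)
      ((univ : Set ℝ) ×ˢ Metric.ball (0 : EuclideanSpace ℂ (Fin n))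
        (R₀ / Real.sqrt (1 + k * R₀ ^ 2))) ∧
    ∃ f : ℝ × EuclideanSpace ℂ (Fin n) → ℝ,
      (∀ p ∈ (univ : Set ℝ) ×ˢ Metric.ball (0 : EuclideanSpace ℂ (Fin n)) R₀, 0 < f p) ∧
      ∀ p ∈ (univ : Set ℝ) ×ˢ Metric.ball (0 : EuclideanSpace ℂ (Fin n)) R₀,
        ∀ v : ℝ × EuclideanSpace ℂ (Fin n),
          ηstd n (ψ n k p) (fderiv ℝ (ψ n k) p v) = f p * ηstd n p v := by
  refine ⟨?_, fun p => (1 + (k : ℝ) * ‖p.2‖ ^ 2)⁻¹, fun p _ => by positivity,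
    fun p _ v => ηstd_fderiv_ψ n k p v⟩
  rw [ψ_eq_comp]
  exact (fibreRotation_bijOn_ball _ _).comp
    ((bijOn_id univ).prodMap (squeeze_bijOn_ball k.cast_nonneg R₀))

theorem contact_blowup_stmt0 (n k : ℕ) (hn : 0 < n) (hk : 0 < k) (R₀ : ℝ) (hR₀ : 0 < R₀) :
    Set.BijOn (ψ n k)
      ((univ : Set ℝ) ×ˢ Metric.ball (0 : EuclideanSpace ℂ (Fin n)) R₀)
      ((univ : Set ℝ) ×ˢ Metric.ball (0 : EuclideanSpace ℂ (Fin n))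
        (R₀ / Real.sqrt (1 + k * R₀ ^ 2))) ∧
    ∃ f : ℝ × EuclideanSpace ℂ (Fin n) → ℝ,
      (∀ p ∈ (univ : Set ℝ) ×ˢ Metric.ball (0 : EuclideanSpace ℂ (Fin n)) R₀, 0 < f p) ∧
      ∀ p ∈ (univ : Set ℝ) ×ˢ Metric.ball (0 : EuclideanSpace ℂ (Fin n)) R₀,
        ∀ v : ℝ × EuclideanSpace ℂ (Fin n),
          ηstd n (ψ n k p) (fderiv ℝ (ψ n k) p v) = f p * ηstd n p v :=
  contact_blowup_stmt0_general n k R₀
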